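/- Let f(r) = r(1+r^2)^{-1/4}, h(r) = (1+r^2)^{-α} with α > 0, and let p ≥ 2 be an integer. For all r > 0, the quantity -f''(r)/f(r) + ((p-2)/f(r)^2)(1 - f'(r)^2) - f'(r)h'(r)/(f(r)h(r)) is strictly positive. -/

import Mathlib

/-!
On `r > 0` the function `f` is positive, increasing with `0 < f' ≤ 1`, and strictly concave,
while `h` is positive and non-increasing. Hence `-f''/f > 0`, the middle term is nonnegative
because `f'² ≤ 1` and `p ≥ 2`, and `-f'h'/(fh) ≥ 0`.
-/

noncomputable def f (r : ℝ) : ℝ := r * (1 + r ^ 2) ^ (-(1 / 4 : ℝ))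

noncomputable def h (α : ℝ) (r : ℝ) : ℝ := (1 + r ^ 2) ^ (-α)

open Real

lemma one_add_sq_pos (r : ℝ) : 0 < 1 + r ^ 2 := by positivity

lemma hasDerivAt_one_add_sq_rpow (a r : ℝ) :
    HasDerivAt (fun r : ℝ => (1 + r ^ 2) ^ a) (2 * r * a * (1 + r ^ 2) ^ (a - 1)) r := by
  have hbase : HasDerivAt (fun r : ℝ => 1 + r ^ 2) (2 * r) r := by
    simpa using (hasDerivAt_pow 2 r).const_add 1
  exact hbase.rpow_const (Or.inl (one_add_sq_pos r).ne')

lemma hasDerivAt_f (r : ℝ) :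
    HasDerivAt f ((1 + r ^ 2) ^ (-(5 / 4 : ℝ)) * (1 + r ^ 2 / 2)) r := by
  have hf := (hasDerivAt_id r).mul (hasDerivAt_one_add_sq_rpow (-(1 / 4)) r)
  have hpow : (1 + r ^ 2) ^ (-(1 / 4 : ℝ)) = (1 + r ^ 2) ^ (-(5 / 4 : ℝ)) * (1 + r ^ 2) := by
    rw [← rpow_add_one (one_add_sq_pos r).ne']
    norm_num
  refine hf.congr_deriv ?_
  rw [show -(1 / 4 : ℝ) - 1 = -(5 / 4) by norm_num, hpow, id]
  ring

lemma deriv_f (r : ℝ) : deriv f r = (1 + r ^ 2) ^ (-(5 / 4 : ℝ)) * (1 + r ^ 2 / 2) :=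
  (hasDerivAt_f r).deriv

lemma deriv_deriv_f (r : ℝ) :
    deriv (deriv f) r = -((1 + r ^ 2) ^ (-(9 / 4 : ℝ)) * (r * (6 + r ^ 2) / 4)) := by
  have hquad : HasDerivAt (fun r : ℝ => 1 + r ^ 2 / 2) r r := by
    simpa using ((hasDerivAt_pow 2 r).div_const 2).const_add 1
  have hdf := (hasDerivAt_one_add_sq_rpow (-(5 / 4)) r).fun_mul hquad
  have hpow : (1 + r ^ 2) ^ (-(5 / 4 : ℝ)) = (1 + r ^ 2) ^ (-(9 / 4 : ℝ)) * (1 + r ^ 2) := by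
    rw [← rpow_add_one (one_add_sq_pos r).ne']
    norm_num
  rw [funext deriv_f, hdf.deriv, show -(5 / 4 : ℝ) - 1 = -(9 / 4) by norm_num, hpow]
  ring

lemma f_pos {r : ℝ} (hr : 0 < r) : 0 < f r :=
  mul_pos hr (rpow_pos_of_pos (one_add_sq_pos r) _)

lemma deriv_f_pos (r : ℝ) : 0 < deriv f r := by
  rw [deriv_f]
  have := rpow_pos_of_pos (one_add_sq_pos r) (-(5 / 4))
  positivity

lemma deriv_f_le_one (r : ℝ) : deriv f r ≤ 1 := by
  have hu := one_add_sq_pos r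
  rw [deriv_f]
  calc (1 + r ^ 2) ^ (-(5 / 4 : ℝ)) * (1 + r ^ 2 / 2)
      ≤ (1 + r ^ 2) ^ (-1 : ℝ) * (1 + r ^ 2) := by
        gcongr
        · exact le_add_of_nonneg_right (sq_nonneg r)
        · norm_num
        · linarith [sq_nonneg r]
    _ = 1 := by rw [rpow_neg_one, inv_mul_cancel₀ hu.ne']

lemma deriv_deriv_f_neg {r : ℝ} (hr : 0 < r) : deriv (deriv f) r < 0 := by
  rw [deriv_deriv_f, neg_neg_iff_pos]
  have := rpow_pos_of_pos (one_add_sq_pos r) (-(9 / 4))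
  positivity

lemma h_pos (α r : ℝ) : 0 < h α r :=
  rpow_pos_of_pos (one_add_sq_pos r) _

lemma hasDerivAt_h (α r : ℝ) : HasDerivAt (h α) (2 * r * -α * (1 + r ^ 2) ^ (-α - 1)) r :=
  hasDerivAt_one_add_sq_rpow (-α) r

lemma deriv_h_nonpos {α r : ℝ} (hα : 0 ≤ α) (hr : 0 ≤ r) : deriv (h α) r ≤ 0 := by
  rw [(hasDerivAt_h α r).deriv]
  have := rpow_pos_of_pos (one_add_sq_pos r) (-α - 1)
  have : 0 ≤ 2 * r * α * (1 + r ^ 2) ^ (-α - 1) := by positivity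
  linarith

theorem stmt_5 (α : ℝ) (hα : 0 < α) (p : ℕ) (hp : 2 ≤ p) :
    ∀ r : ℝ, 0 < r →
      0 < -(deriv (deriv f) r) / f r
            + (((p : ℝ) - 2) / (f r) ^ 2) * (1 - (deriv f r) ^ 2)
            - deriv f r * deriv (h α) r / (f r * h α r) := by
  intro r hr
  have hconcave : 0 < -(deriv (deriv f) r) / f r :=
    div_pos (neg_pos.2 (deriv_deriv_f_neg hr)) (f_pos hr)
  have hsphere : 0 ≤ (((p : ℝ) - 2) / (f r) ^ 2) * (1 - (deriv f r) ^ 2) := by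
    have hp' : (2 : ℝ) ≤ p := by exact_mod_cast hp
    refine mul_nonneg (div_nonneg (by linarith) (sq_nonneg _)) (sub_nonneg.2 ?_)
    exact pow_le_one₀ (deriv_f_pos r).le (deriv_f_le_one r)
  have hwarp : deriv f r * deriv (h α) r / (f r * h α r) ≤ 0 :=
    div_nonpos_of_nonpos_of_nonneg
      (mul_nonpos_of_nonneg_of_nonpos (deriv_f_pos r).le (deriv_h_nonpos hα.le hr.le))
      (mul_pos (f_pos hr) (h_pos α r)).le
  linarith
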